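/- arXiv:1902.04022 — 2 statements merged into one kernel-verified Lean document; each statement's English description precedes it below -/
import Mathlib

section
/- Let k ≥ 2, m ≥ 1, ξ = exp(2πi/2^k), and let R be a symmetric m×m integer matrix. Let a, b ∈ ℤ_{≥0}^m with binary digit expansions a = a_0 + 2a_1 + …, b = b_0 + 2b_1 + … (a_i, b_i ∈ {0,1}^m). Then τ_R^{(k)} E(a,b) (τ_R^{(k)})^† = ξ^{φ(R,a,b,k)} E(a_0, b_0 + a_0 R) τ_{R̃(R,a,k)}^{(k−1)}, where φ(R,a,b,k) := (1 − 2^{k−2}) a_0 R a_0^T + 2^{k−1}(a_0 b_1^T + b_0 a_1^T) and R̃(R,a,k) := (1 + 2^{k−2}) D_{a_0 R} − (D_{ā_0} R D_{a_0} + D_{a_0} R D_{ā_0} + 2 D_{a_0 R D_{a_0}}), a symmetric integer matrix taken modulo 2^{k−1}; here ā_0 = 𝟙 − a_0, D_x = diag(x) for a row vector x, and τ_{R̃}^{(k−1)} is defined with respect to ξ_{k−1} = ξ^2 = exp(2πi/2^{k−1}). -/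
open Complex Matrix

namespace CliffordHierarchy

noncomputable section

variable {ι : Type*} [Fintype ι] [DecidableEq ι]

/-- Embed a binary vector (entries in `ZMod 2`) into ℤ as a 0/1 vector. -/
def toZ (v : ι → ZMod 2) : ι → ℤ := fun i => ((v i).val : ℤ)

/-- Reduce an integer vector mod 2, viewed in `ZMod 2`. -/
def red2 (a : ι → ℤ) : ι → ZMod 2 := fun i => ((a i : ZMod 2))

/-- Dot product of integer row vectors, over ℤ. -/
def dotZ (x y : ι → ℤ) : ℤ := ∑ i, x i * y i

/-- Bilinear form `x R yᵀ` over ℤ. -/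
def bil (R : Matrix ι ι ℤ) (x y : ι → ℤ) : ℤ := ∑ i, ∑ j, x i * R i j * y j

/-- η(v; R, w) = [(v + w) − (v ∗ w)] R (v ∗ w)ᵀ, with ∗ the entrywise product. -/
def eta (R : Matrix ι ι ℤ) (v w : ι → ℤ) : ℤ := bil R (v + w - v * w) (v * w)

/-- bitwise XOR of 0/1 integer vectors, re-embedded as a 0/1 integer vector. -/
def vxor (v w : ι → ℤ) : ι → ℤ := fun i => v i + w i - 2 * (v i * w i)

/-- ξ_k = exp(2πi/2^k). -/
def xi (k : ℕ) : ℂ := Complex.exp (2 * Real.pi * Complex.I / 2 ^ k)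

/-- τ_R^{(k)} = diag(ξ^{v R vᵀ mod 2^k}), indexed by v ∈ {0,1}^m. -/
def tau (k : ℕ) (R : Matrix ι ι ℤ) : Matrix (ι → ZMod 2) (ι → ZMod 2) ℂ :=
  Matrix.diagonal fun v => xi k ^ (bil R (toZ v) (toZ v) % 2 ^ k)

/-- The Hermitian Pauli matrix E(a,b) extended to integer-vector arguments:
    E(a,b) e_v = i^{a·b mod 4} (−1)^{v·b} e_{v ⊕ a₀}. -/
def EMat (a b : ι → ℤ) : Matrix (ι → ZMod 2) (ι → ZMod 2) ℂ :=
  Matrix.of fun u v =>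
    if u = v + red2 a then Complex.I ^ (dotZ a b % 4) * (-1 : ℂ) ^ dotZ (toZ v) b else 0

/-- 0th binary digit vector of a (componentwise `mod 2`). -/
def dig0 (a : ι → ℤ) : ι → ℤ := fun i => a i % 2

/-- 1st binary digit vector of a. -/
def dig1 (a : ι → ℤ) : ι → ℤ := fun i => (a i / 2) % 2

/-- q^{(k−1)}(v; R, a, b). -/
def qfun (k : ℕ) (R : Matrix ι ι ℤ) (a b v : ι → ℤ) : ℤ :=
  (1 - 2 ^ (k - 2)) * bil R (dig0 a) (dig0 a)
    + 2 ^ (k - 1) * (dotZ (dig0 a) (dig1 b) + dotZ (dig0 b) (dig1 a))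
    + (2 + 2 ^ (k - 1)) * bil R v (dig0 a) - 4 * eta R v (dig0 a)


/-- φ(R, a, b, k). -/
def phi (k : ℕ) (R : Matrix ι ι ℤ) (a b : ι → ℤ) : ℤ :=
  (1 - 2 ^ (k - 2)) * bil R (dig0 a) (dig0 a)
    + 2 ^ (k - 1) * (dotZ (dig0 a) (dig1 b) + dotZ (dig0 b) (dig1 a))

/-- R̃(R, a, k). -/
def Rtil (k : ℕ) (R : Matrix ι ι ℤ) (a : ι → ℤ) : Matrix ι ι ℤ :=
  ((1 : ℤ) + 2 ^ (k - 2)) • Matrix.diagonal (Matrix.vecMul (dig0 a) R)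
    - (Matrix.diagonal (fun i => 1 - dig0 a i) * R * Matrix.diagonal (dig0 a)
        + Matrix.diagonal (dig0 a) * R * Matrix.diagonal (fun i => 1 - dig0 a i)
        + (2 : ℤ) • Matrix.diagonal (Matrix.vecMul (dig0 a) (R * Matrix.diagonal (dig0 a))))


-- AUXILIARY LEMMAS (inserted above stmt3)

lemma xi_ne_zero (k : ℕ) : xi k ≠ 0 := Complex.exp_ne_zero _

lemma xi_zpow (k : ℕ) (n : ℤ) :
    xi k ^ n = Complex.exp ((n : ℂ) * (2 * Real.pi * Complex.I / 2 ^ k)) := by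
  rw [xi, ← Complex.exp_int_mul]

lemma xi_pow2 (k : ℕ) : xi k ^ ((2 : ℤ) ^ k) = 1 := by
  rw [xi_zpow]
  have h2 : ((2 : ℂ)) ^ k ≠ 0 := pow_ne_zero _ two_ne_zero
  have h : (((2 : ℤ) ^ k : ℤ) : ℂ) * (2 * Real.pi * Complex.I / 2 ^ k)
      = 2 * Real.pi * Complex.I := by
    push_cast
    field_simp
  rw [h, Complex.exp_two_pi_mul_I]

lemma xi_congr (k : ℕ) {p q : ℤ} (h : (2 : ℤ) ^ k ∣ p - q) : xi k ^ p = xi k ^ q := by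
  obtain ⟨t, ht⟩ := h
  have hp : p = q + (2 : ℤ) ^ k * t := by linarith
  rw [hp, zpow_add₀ (xi_ne_zero k), _root_.zpow_mul, xi_pow2, _root_.one_zpow, mul_one]

lemma xi_emod (k : ℕ) (n : ℤ) : xi k ^ (n % (2 : ℤ) ^ k) = xi k ^ n :=
  xi_congr k ⟨-(n / 2 ^ k), by rw [Int.emod_def]; ring⟩

lemma xi_neg_emod (k : ℕ) (n : ℤ) : xi k ^ (-(n % (2 : ℤ) ^ k)) = xi k ^ (-n) := by
  rw [_root_.zpow_neg, _root_.zpow_neg, xi_emod]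

lemma I_zpow_emod (n : ℤ) : Complex.I ^ (n % 4) = Complex.I ^ n := by
  have h4 : Complex.I ^ (4 : ℤ) = 1 := by
    rw [show (4 : ℤ) = ((4 : ℕ) : ℤ) from rfl, zpow_natCast, Complex.I_pow_four]
  conv_rhs => rw [← Int.emod_add_mul_ediv n 4]
  rw [zpow_add₀ Complex.I_ne_zero, _root_.zpow_mul, h4, _root_.one_zpow, mul_one]

lemma star_xi (k : ℕ) : star (xi k) = (xi k)⁻¹ := by
  have hc : (starRingEnd ℂ) (2 * (Real.pi : ℂ) * Complex.I / 2 ^ k)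
      = -(2 * (Real.pi : ℂ) * Complex.I / 2 ^ k) := by
    simp only [map_div₀, _root_.map_mul, map_pow, Complex.conj_I, Complex.conj_ofReal,
      map_ofNat]
    ring
  calc star (xi k) = Complex.exp ((starRingEnd ℂ) (2 * (Real.pi : ℂ) * Complex.I / 2 ^ k)) := by
        rw [xi, Complex.exp_conj]; rfl
    _ = (xi k)⁻¹ := by rw [hc, Complex.exp_neg, xi]

lemma star_xi_zpow (k : ℕ) (n : ℤ) : star (xi k ^ n) = xi k ^ (-n) := by
  rw [star_zpow₀, star_xi, _root_.inv_zpow, ← _root_.zpow_neg]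

lemma I_as_xi {k : ℕ} (hk : 2 ≤ k) : Complex.I = xi k ^ ((2 : ℤ) ^ (k - 2)) := by
  rw [xi_zpow]
  have hne : ((2 : ℂ)) ^ (k - 2) ≠ 0 := pow_ne_zero _ two_ne_zero
  have h2 : (2 : ℂ) ^ k = 2 ^ (k - 2) * 4 := by
    conv_lhs => rw [show k = (k - 2) + 2 by omega]
    rw [pow_add]; norm_num
  have h : (((2 : ℤ) ^ (k - 2) : ℤ) : ℂ) * (2 * Real.pi * Complex.I / 2 ^ k)
      = ((Real.pi / 2 : ℝ) : ℂ) * Complex.I := by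
    push_cast
    rw [h2]
    field_simp
    ring
  rw [h, Complex.exp_mul_I, ← Complex.ofReal_cos, ← Complex.ofReal_sin,
    Real.cos_pi_div_two, Real.sin_pi_div_two]
  simp

lemma neg_one_as_xi {k : ℕ} (hk : 1 ≤ k) : (-1 : ℂ) = xi k ^ ((2 : ℤ) ^ (k - 1)) := by
  rw [xi_zpow]
  have hne : ((2 : ℂ)) ^ (k - 1) ≠ 0 := pow_ne_zero _ two_ne_zero
  have h2 : (2 : ℂ) ^ k = 2 ^ (k - 1) * 2 := by
    conv_lhs => rw [show k = (k - 1) + 1 by omega]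
    rw [pow_add]; norm_num
  have h : (((2 : ℤ) ^ (k - 1) : ℤ) : ℂ) * (2 * Real.pi * Complex.I / 2 ^ k)
      = ((Real.pi : ℝ) : ℂ) * Complex.I := by
    push_cast
    rw [h2]
    field_simp
  rw [h, Complex.exp_pi_mul_I]

lemma I_zpow_as {k : ℕ} (hk : 2 ≤ k) (n : ℤ) :
    Complex.I ^ n = xi k ^ ((2 : ℤ) ^ (k - 2) * n) := by
  rw [I_as_xi hk, ← _root_.zpow_mul]

lemma neg_one_zpow_as {k : ℕ} (hk : 1 ≤ k) (n : ℤ) :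
    (-1 : ℂ) ^ n = xi k ^ ((2 : ℤ) ^ (k - 1) * n) := by
  rw [neg_one_as_xi hk, ← _root_.zpow_mul]

lemma xi_pred {k : ℕ} (hk : 1 ≤ k) (n : ℤ) : xi (k - 1) ^ n = xi k ^ (2 * n) := by
  have h2 : (2 : ℂ) ^ k = 2 * 2 ^ (k - 1) := by
    conv_lhs => rw [show k = (k - 1) + 1 by omega]
    rw [pow_add]; ring
  have h : xi (k - 1) = xi k ^ (2 : ℤ) := by
    rw [xi_zpow, xi]
    congr 1
    push_cast
    rw [h2]
    have hne : ((2 : ℂ)) ^ (k - 1) ≠ 0 := pow_ne_zero _ two_ne_zero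
    field_simp
  rw [h, ← _root_.zpow_mul]

-- ZMod 2 pointwise facts

lemma zmod_val_add (x y : ZMod 2) :
    (((x + y).val : ℤ)) = (x.val : ℤ) + (y.val : ℤ) - 2 * ((x.val : ℤ) * (y.val : ℤ)) := by
  revert x y; decide

lemma zmod_val_sq (x : ZMod 2) : ((x.val : ℤ)) * ((x.val : ℤ)) = ((x.val : ℤ)) := by
  revert x; decide

lemma red2_val (x : ℤ) : (((x : ZMod 2)).val : ℤ) = x % 2 := by
  simpa using ZMod.val_intCast (n := 2) x

lemma toZ_add_red2 (v : ι → ZMod 2) (a : ι → ℤ) :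
    toZ (v + red2 a) = vxor (toZ v) (dig0 a) := by
  funext i
  simp only [toZ, Pi.add_apply, vxor, red2, dig0]
  rw [zmod_val_add, red2_val]

lemma red2_dig0 (a : ι → ℤ) : red2 (dig0 a) = red2 a := by
  funext i
  simp only [red2, dig0]
  have h20 : (2 : ZMod 2) = 0 := by decide
  rw [Int.emod_def]
  push_cast
  rw [h20]
  ring

-- sum gadgets

lemma sum2_congr {f g : ι → ι → ℤ} (h : ∀ i j, f i j = g i j) :
    (∑ i, ∑ j, f i j) = ∑ i, ∑ j, g i j :=
  Finset.sum_congr rfl fun i _ => Finset.sum_congr rfl fun j _ => h i j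

lemma sum2_sub (f g : ι → ι → ℤ) :
    (∑ i, ∑ j, (f i j - g i j)) = (∑ i, ∑ j, f i j) - ∑ i, ∑ j, g i j := by
  simp [Finset.sum_sub_distrib]

-- bil structural lemmas

lemma bil_sub (A B : Matrix ι ι ℤ) (x y : ι → ℤ) :
    bil (A - B) x y = bil A x y - bil B x y := by
  simp [bil, Matrix.sub_apply, mul_sub, sub_mul, Finset.sum_sub_distrib]

lemma bil_add (A B : Matrix ι ι ℤ) (x y : ι → ℤ) :
    bil (A + B) x y = bil A x y + bil B x y := by
  simp [bil, Matrix.add_apply, mul_add, add_mul, Finset.sum_add_distrib]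

lemma bil_smul (c : ℤ) (A : Matrix ι ι ℤ) (x y : ι → ℤ) :
    bil (c • A) x y = c * bil A x y := by
  simp only [bil, Matrix.smul_apply, smul_eq_mul, Finset.mul_sum]
  exact sum2_congr fun i j => by ring

lemma bil_diagonal (d x y : ι → ℤ) :
    bil (Matrix.diagonal d) x y = ∑ i, x i * d i * y i := by
  unfold bil
  refine Finset.sum_congr rfl fun i _ => ?_
  rw [Finset.sum_eq_single i]
  · rw [Matrix.diagonal_apply_eq]
  · intro j _ hji
    rw [Matrix.diagonal_apply_ne d (Ne.symm hji)]
    ring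
  · intro hmem
    exact absurd (Finset.mem_univ i) hmem

lemma bil_dmd (e f : ι → ℤ) (A : Matrix ι ι ℤ) (x y : ι → ℤ) :
    bil (Matrix.diagonal e * A * Matrix.diagonal f) x y
      = ∑ i, ∑ j, (x i * e i) * A i j * (f j * y j) := by
  unfold bil
  refine sum2_congr fun i j => ?_
  rw [Matrix.mul_diagonal, Matrix.diagonal_mul]
  ring

lemma bilswap {R : Matrix ι ι ℤ} (hsym : ∀ i j, R j i = R i j) (f g : ι → ℤ) :
    (∑ i, ∑ j, f i * R i j * g j) = ∑ i, ∑ j, g i * R i j * f j := by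
  rw [Finset.sum_comm]
  exact Finset.sum_congr rfl fun i _ => Finset.sum_congr rfl fun j _ => by
    rw [hsym i j]; ring

-- dot product lemmas

lemma dotZ_add (x y z : ι → ℤ) : dotZ x (y + z) = dotZ x y + dotZ x z := by
  simp [dotZ, Pi.add_apply, mul_add, Finset.sum_add_distrib]

lemma dotZ_vecMul (x y : ι → ℤ) (A : Matrix ι ι ℤ) :
    dotZ x (Matrix.vecMul y A) = ∑ i, ∑ j, y i * A i j * x j := by
  simp only [dotZ, Matrix.vecMul, dotProduct, Finset.mul_sum]
  rw [Finset.sum_comm]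
  exact sum2_congr fun i j => by ring

lemma bil_diag_vecMul {R : Matrix ι ι ℤ} (hsym : ∀ i j, R j i = R i j) (α w : ι → ℤ)
    (hw : ∀ i, w i * w i = w i) :
    bil (Matrix.diagonal (Matrix.vecMul α R)) w w = ∑ i, ∑ j, w i * R i j * α j := by
  rw [bil_diagonal]
  refine Finset.sum_congr rfl fun i _ => ?_
  simp only [Matrix.vecMul, dotProduct, Finset.mul_sum, Finset.sum_mul]
  refine Finset.sum_congr rfl fun j _ => ?_
  rw [hsym i j]
  linear_combination (α j * R i j) * hw i

lemma bil_diag_vecMul2 {R : Matrix ι ι ℤ} (hsym : ∀ i j, R j i = R i j) (α w : ι → ℤ)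
    (hw : ∀ i, w i * w i = w i) :
    bil (Matrix.diagonal (Matrix.vecMul α (R * Matrix.diagonal α))) w w
      = ∑ i, ∑ j, (w i * α i) * R i j * α j := by
  rw [bil_diagonal]
  refine Finset.sum_congr rfl fun i _ => ?_
  simp only [Matrix.vecMul, dotProduct, Matrix.mul_diagonal, Finset.mul_sum,
    Finset.sum_mul]
  refine Finset.sum_congr rfl fun j _ => ?_
  rw [hsym i j]
  linear_combination (α j * R i j * α i) * hw i

-- the main integer congruence

lemma main_dvd (k : ℕ) (hk : 2 ≤ k) (R : Matrix ι ι ℤ)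
    (hsym : ∀ i j, R j i = R i j) (a b w : ι → ℤ) (hw : ∀ i, w i * w i = w i) :
    (2 : ℤ) ^ k ∣ (bil R (vxor w (dig0 a)) (vxor w (dig0 a)) - bil R w w
        + 2 ^ (k - 2) * dotZ a b + 2 ^ (k - 1) * dotZ w b)
      - (phi k R a b + 2 ^ (k - 2) * dotZ (dig0 a) (dig0 b + Matrix.vecMul (dig0 a) R)
        + 2 ^ (k - 1) * dotZ w (dig0 b + Matrix.vecMul (dig0 a) R)
        + 2 * bil (Rtil k R a) w w) := by
  have hk1 : (2 : ℤ) ^ (k - 1) = 2 * 2 ^ (k - 2) := by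
    conv_lhs => rw [show k - 1 = (k - 2) + 1 by omega]
    rw [pow_succ]; ring
  have hkk : (2 : ℤ) ^ k = 4 * 2 ^ (k - 2) := by
    conv_lhs => rw [show k = (k - 2) + 2 by omega]
    rw [pow_add]; ring
  have F1 : bil R (vxor w (dig0 a)) (vxor w (dig0 a))
      = (∑ i, ∑ j, w i * R i j * w j) + (∑ i, ∑ j, w i * R i j * dig0 a j)
        + (∑ i, ∑ j, dig0 a i * R i j * w j) + (∑ i, ∑ j, dig0 a i * R i j * dig0 a j)
        - 2 * (∑ i, ∑ j, w i * R i j * (w j * dig0 a j))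
        - 2 * (∑ i, ∑ j, dig0 a i * R i j * (w j * dig0 a j))
        - 2 * (∑ i, ∑ j, (w i * dig0 a i) * R i j * w j)
        - 2 * (∑ i, ∑ j, (w i * dig0 a i) * R i j * dig0 a j)
        + 4 * (∑ i, ∑ j, (w i * dig0 a i) * R i j * (w j * dig0 a j)) := by
    symm
    simp only [Finset.mul_sum, ← Finset.sum_add_distrib, ← Finset.sum_sub_distrib]
    exact sum2_congr fun i j => by simp only [vxor]; ring
  have F2 : bil R w w = ∑ i, ∑ j, w i * R i j * w j := rfl
  have F3 : bil R (dig0 a) (dig0 a) = ∑ i, ∑ j, dig0 a i * R i j * dig0 a j := rfl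
  have F4 : dotZ (dig0 a) (dig0 b + Matrix.vecMul (dig0 a) R)
      = dotZ (dig0 a) (dig0 b) + ∑ i, ∑ j, dig0 a i * R i j * dig0 a j := by
    rw [dotZ_add, dotZ_vecMul]
  have F5 : dotZ w (dig0 b + Matrix.vecMul (dig0 a) R)
      = dotZ w (dig0 b) + ∑ i, ∑ j, dig0 a i * R i j * w j := by
    rw [dotZ_add, dotZ_vecMul]
  have hdmd1 : bil (Matrix.diagonal (fun i => 1 - dig0 a i) * R * Matrix.diagonal (dig0 a)) w w
      = (∑ i, ∑ j, w i * R i j * (w j * dig0 a j))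
        - (∑ i, ∑ j, (w i * dig0 a i) * R i j * (w j * dig0 a j)) := by
    rw [bil_dmd, ← sum2_sub]
    exact sum2_congr fun i j => by ring
  have hdmd2 : bil (Matrix.diagonal (dig0 a) * R * Matrix.diagonal (fun i => 1 - dig0 a i)) w w
      = (∑ i, ∑ j, (w i * dig0 a i) * R i j * w j)
        - (∑ i, ∑ j, (w i * dig0 a i) * R i j * (w j * dig0 a j)) := by
    rw [bil_dmd, ← sum2_sub]
    exact sum2_congr fun i j => by ring
  have F6 : bil (Rtil k R a) w w
      = (1 + 2 ^ (k - 2)) * (∑ i, ∑ j, w i * R i j * dig0 a j)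
        - (((∑ i, ∑ j, w i * R i j * (w j * dig0 a j))
              - (∑ i, ∑ j, (w i * dig0 a i) * R i j * (w j * dig0 a j)))
            + ((∑ i, ∑ j, (w i * dig0 a i) * R i j * w j)
              - (∑ i, ∑ j, (w i * dig0 a i) * R i j * (w j * dig0 a j)))
            + 2 * (∑ i, ∑ j, (w i * dig0 a i) * R i j * dig0 a j)) := by
    simp only [Rtil]
    rw [bil_sub, bil_smul, bil_add, bil_add, bil_smul,
      bil_diag_vecMul hsym (dig0 a) w hw, bil_diag_vecMul2 hsym (dig0 a) w hw, hdmd1, hdmd2]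
  have hA : (∑ i, ∑ j, dig0 a i * R i j * w j) = ∑ i, ∑ j, w i * R i j * dig0 a j :=
    bilswap hsym (dig0 a) w
  have hB : (∑ i, ∑ j, (w i * dig0 a i) * R i j * dig0 a j)
      = ∑ i, ∑ j, dig0 a i * R i j * (w j * dig0 a j) :=
    bilswap hsym (fun i => w i * dig0 a i) (dig0 a)
  have Fsingle : 2 ^ (k - 2) * dotZ a b + 2 * 2 ^ (k - 2) * dotZ w b
      - 2 * 2 ^ (k - 2) * dotZ (dig0 a) (dig1 b) - 2 * 2 ^ (k - 2) * dotZ (dig0 b) (dig1 a)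
      - 2 ^ (k - 2) * dotZ (dig0 a) (dig0 b) - 2 * 2 ^ (k - 2) * dotZ w (dig0 b)
      = ∑ i, (2: ℤ) ^ (k - 2) * (a i * b i + 2 * (w i * b i) - 2 * (dig0 a i * dig1 b i)
          - 2 * (dig0 b i * dig1 a i) - dig0 a i * dig0 b i - 2 * (w i * dig0 b i)) := by
    symm
    simp only [dotZ, Finset.mul_sum, ← Finset.sum_add_distrib, ← Finset.sum_sub_distrib]
    exact Finset.sum_congr rfl fun i _ => by ring
  have key : (bil R (vxor w (dig0 a)) (vxor w (dig0 a)) - bil R w w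
        + 2 ^ (k - 2) * dotZ a b + 2 ^ (k - 1) * dotZ w b)
      - (phi k R a b + 2 ^ (k - 2) * dotZ (dig0 a) (dig0 b + Matrix.vecMul (dig0 a) R)
        + 2 ^ (k - 1) * dotZ w (dig0 b + Matrix.vecMul (dig0 a) R)
        + 2 * bil (Rtil k R a) w w)
      = (-(4 * 2 ^ (k - 2))) * (∑ i, ∑ j, w i * R i j * dig0 a j)
        + ∑ i, (2 : ℤ) ^ (k - 2) * (a i * b i + 2 * (w i * b i) - 2 * (dig0 a i * dig1 b i)
            - 2 * (dig0 b i * dig1 a i) - dig0 a i * dig0 b i - 2 * (w i * dig0 b i)) := by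
    simp only [phi]
    rw [F1, F2, F3, F4, F5, F6, hk1]
    linear_combination (1 - 2 * (2 : ℤ) ^ (k - 2)) * hA + 2 * hB + Fsingle
  rw [key, hkk]
  refine dvd_add ⟨-(∑ i, ∑ j, w i * R i j * dig0 a j), by ring⟩
    (Finset.dvd_sum fun i _ => ?_)
  obtain ⟨c, hc⟩ : ∃ c, a i = dig0 a i + 2 * dig1 a i + 4 * c :=
    ⟨a i / 2 / 2, by simp only [dig0, dig1]; omega⟩
  obtain ⟨d, hd⟩ : ∃ d, b i = dig0 b i + 2 * dig1 b i + 4 * d :=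
    ⟨b i / 2 / 2, by simp only [dig0, dig1]; omega⟩
  refine ⟨dig0 a i * d + dig1 a i * dig1 b i + 2 * (dig1 a i * d)
      + c * dig0 b i + 2 * (c * dig1 b i) + 4 * (c * d) + w i * dig1 b i + 2 * (w i * d), ?_⟩
  rw [hc, hd]
  ring


theorem stmt3 {m k : ℕ} (hm : 1 ≤ m) (hk : 2 ≤ k)
    (R : Matrix (Fin m) (Fin m) ℤ) (hR : R.IsSymm)
    (a b : Fin m → ℤ) (ha : ∀ i, 0 ≤ a i) (hb : ∀ i, 0 ≤ b i) :
    tau k R * EMat a b * (tau k R)ᴴ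
      = (xi k ^ phi k R a b) •
          (EMat (dig0 a) (dig0 b + Matrix.vecMul (dig0 a) R) * tau (k - 1) (Rtil k R a)) := by
  have hsym : ∀ i j, R j i = R i j := fun i j => hR.apply i j
  have hk1 : 1 ≤ k := by omega
  have hconj : (tau k R)ᴴ
      = Matrix.diagonal (fun x => xi k ^ (-(bil R (toZ x) (toZ x) % 2 ^ k))) := by
    have hstarfun : (star fun x : Fin m → ZMod 2 => xi k ^ (bil R (toZ x) (toZ x) % 2 ^ k))
        = fun x : Fin m → ZMod 2 => xi k ^ (-(bil R (toZ x) (toZ x) % 2 ^ k)) := by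
      funext x
      rw [Pi.star_apply, star_xi_zpow]
    rw [tau, Matrix.diagonal_conjTranspose, hstarfun]
  ext u v
  rw [hconj]
  simp only [tau]
  rw [Matrix.mul_diagonal, Matrix.diagonal_mul, Matrix.smul_apply, Matrix.mul_diagonal,
    smul_eq_mul]
  simp only [EMat, Matrix.of_apply, red2_dig0]
  by_cases h : u = v + red2 a
  · rw [if_pos h, if_pos h]
    subst h
    rw [toZ_add_red2]
    have hw : ∀ i, toZ v i * toZ v i = toZ v i := fun i => zmod_val_sq (v i)
    rw [xi_emod, xi_neg_emod, I_zpow_emod, I_zpow_emod, xi_emod (k - 1),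
      xi_pred hk1]
    simp only [I_zpow_as hk, neg_one_zpow_as hk1]
    simp only [← zpow_add₀ (xi_ne_zero k)]
    refine xi_congr k ?_
    obtain ⟨t, ht⟩ := main_dvd k hk R hsym a b (toZ v) hw
    exact ⟨t, by linear_combination ht⟩
  · rw [if_neg h, if_neg h]
    ring



end

end CliffordHierarchy
end

section
/- Let k = 2, m ≥ 1, and let R be a symmetric m×m integer matrix. For all a, b ∈ {0,1}^m and all v ∈ {0,1}^m, the quantity q^{(1)}(v; R, a, b) := (1 − 2^{k−2}) a R a^T + (2 + 2^{k−1}) v R a^T − 4 η(v; R, a) (with k = 2, so = 0·aRa^T + 4 v R a^T − 4η(v;R,a)) satisfies q^{(1)}(v; R, a, b) ≡ 0 (mod 4). Consequently τ_R^{(2)} E(a,b) (τ_R^{(2)})^† = E(a, b + aR), where the second argument b + aR is an integer row vector. -/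
/-!
For symmetric `R` the quadratic form `Q x = x R xᵀ` satisfies, with `v ⊕ a = v + a - 2 (v ∗ a)`,
the exact identity `Q (v ⊕ a) = Q v + Q a + 2 v R aᵀ - 4 η(v; R, a)`. Modulo 4 the `η`-term
drops out, so conjugating `E(a,b)` by `τ_R^{(2)}` multiplies its `(v ⊕ a, v)` entry by
`i^(Q (v ⊕ a) - Q v) = i^(a R aᵀ) (-1)^(v R aᵀ)`, which is exactly the change of
`i^(a·b) (-1)^(v·b)` when `b` is replaced by `b + aR`.
-/

open Complex Matrix

namespace CliffordHierarchy

noncomputable section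

variable {ι : Type*} [Fintype ι] [DecidableEq ι]

lemma vxor_eq_add_sub_two_mul {n : Type*} (v w : n → ℤ) : vxor v w = v + w - 2 • (v * w) := by
  ext i
  simp [vxor]

section Bilinear

variable {n : Type*} [Fintype n] {R : Matrix n n ℤ}

lemma bil_eq_dotProduct_mulVec (R : Matrix n n ℤ) (x y : n → ℤ) : bil R x y = x ⬝ᵥ R *ᵥ y := by
  simp only [bil, dotProduct, mulVec, Finset.mul_sum, mul_assoc]

lemma bil_comm (hR : R.IsSymm) (x y : n → ℤ) : bil R x y = bil R y x := by
  rw [bil_eq_dotProduct_mulVec, bil_eq_dotProduct_mulVec, dotProduct_mulVec, dotProduct_comm,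
    ← mulVec_transpose, hR.eq]

lemma dotZ_vecMul_s4 (R : Matrix n n ℤ) (x y : n → ℤ) : dotZ x (y ᵥ* R) = bil R y x := by
  rw [bil_eq_dotProduct_mulVec, dotProduct_mulVec, dotProduct_comm]
  rfl

lemma dotZ_add_right (x y z : n → ℤ) : dotZ x (y + z) = dotZ x y + dotZ x z :=
  dotProduct_add x y z

lemma bil_vxor_self (hR : R.IsSymm) (v w : n → ℤ) :
    bil R (vxor v w) (vxor v w)
      = bil R v v + bil R w w + 2 * bil R v w - 4 * eta R v w := by
  simp only [vxor_eq_add_sub_two_mul, eta, bil_eq_dotProduct_mulVec, mulVec_add, mulVec_sub,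
    mulVec_smul, dotProduct_add, dotProduct_sub, add_dotProduct, sub_dotProduct, dotProduct_smul,
    smul_dotProduct]
  have hvw := bil_comm hR v w
  have hvc := bil_comm hR v (v * w)
  have hwc := bil_comm hR w (v * w)
  simp only [bil_eq_dotProduct_mulVec] at hvw hvc hwc
  linear_combination -hvw + 2 * hvc + 2 * hwc

end Bilinear

lemma I_zpow_congr {p q : ℤ} (h : p ≡ q [ZMOD 4]) : I ^ p = I ^ q := by
  rw [I_zpow_eq_zpow_mod p, h, ← I_zpow_eq_zpow_mod]

lemma star_I_zpow (p : ℤ) : star (I ^ p) = I ^ (-p) := by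
  rw [star_zpow₀, star_def, conj_I, ← inv_I, _root_.inv_zpow, _root_.zpow_neg]

lemma xi_two : xi 2 = I := by
  rw [xi, show 2 * (Real.pi : ℂ) * I / 2 ^ 2 = (Real.pi / 2 : ℝ) * I by push_cast; ring,
    exp_mul_I, ← ofReal_cos, ← ofReal_sin, Real.cos_pi_div_two, Real.sin_pi_div_two]
  simp

lemma toZ_add_red2_s4 {n : Type*} (w : n → ZMod 2) {a : n → ℤ} (ha : ∀ i, a i = 0 ∨ a i = 1) :
    toZ (w + red2 a) = vxor (toZ w) a := by
  funext i
  have hz : ∀ z : ZMod 2, z = 0 ∨ z = 1 := by decide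
  rcases ha i with h | h <;> rcases hz (w i) with hw | hw <;>
    · simp only [toZ, vxor, Pi.add_apply, red2, h, hw]
      decide

section Pauli

variable {n : Type*} [Fintype n]

lemma tau_two (R : Matrix n n ℤ) : tau 2 R = diagonal fun v => I ^ bil R (toZ v) (toZ v) := by
  rw [tau, xi_two]
  congr
  funext v
  rw [I_zpow_eq_zpow_mod (bil R _ _)]
  norm_num

lemma EMat_apply (a b : n → ℤ) (u v : n → ZMod 2) :
    EMat a b u v = if u = v + red2 a then I ^ (dotZ a b + 2 * dotZ (toZ v) b) else 0 := by
  rw [EMat, of_apply, zpow_add₀ I_ne_zero, _root_.zpow_mul, ← I_zpow_eq_zpow_mod]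
  norm_num

theorem tau_two_mul_EMat_mul_conjTranspose [DecidableEq n] {R : Matrix n n ℤ} (hR : R.IsSymm)
    {a : n → ℤ} (ha : ∀ i, a i = 0 ∨ a i = 1) (b : n → ℤ) :
    tau 2 R * EMat a b * (tau 2 R)ᴴ = EMat a (b + a ᵥ* R) := by
  ext u w
  simp only [tau_two, diagonal_conjTranspose, mul_diagonal, diagonal_mul, EMat_apply,
    Pi.star_apply]
  split_ifs with h
  · subst h
    rw [star_I_zpow, ← zpow_add₀ I_ne_zero, ← zpow_add₀ I_ne_zero]
    apply I_zpow_congr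
    rw [toZ_add_red2_s4 w ha, bil_vxor_self hR, dotZ_add_right, dotZ_add_right, dotZ_vecMul_s4,
      dotZ_vecMul_s4, bil_comm hR a (toZ w)]
    exact Int.modEq_iff_dvd.mpr ⟨eta R (toZ w) a, by ring⟩
  · simp

end Pauli

theorem stmt4_general {m : ℕ}
    (R : Matrix (Fin m) (Fin m) ℤ) (hR : R.IsSymm)
    (a b : Fin m → ℤ) (ha : ∀ i, a i = 0 ∨ a i = 1) :
    (∀ v : Fin m → ℤ, (∀ i, v i = 0 ∨ v i = 1) →
        ((1 - (2 : ℤ) ^ (2 - 2)) * bil R a a + (2 + 2 ^ (2 - 1)) * bil R v a - 4 * eta R v a)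
          ≡ 0 [ZMOD 4])
    ∧ tau 2 R * EMat a b * (tau 2 R)ᴴ = EMat a (b + Matrix.vecMul a R) :=
  ⟨fun v _ => Int.modEq_zero_iff_dvd.mpr ⟨bil R v a - eta R v a, by norm_num; ring⟩,
    tau_two_mul_EMat_mul_conjTranspose hR ha b⟩

theorem stmt4 {m : ℕ} (hm : 1 ≤ m)
    (R : Matrix (Fin m) (Fin m) ℤ) (hR : R.IsSymm)
    (a b : Fin m → ℤ) (ha : ∀ i, a i = 0 ∨ a i = 1) (hb : ∀ i, b i = 0 ∨ b i = 1) :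
    (∀ v : Fin m → ℤ, (∀ i, v i = 0 ∨ v i = 1) →
        ((1 - (2 : ℤ) ^ (2 - 2)) * bil R a a + (2 + 2 ^ (2 - 1)) * bil R v a - 4 * eta R v a)
          ≡ 0 [ZMOD 4])
    ∧ tau 2 R * EMat a b * (tau 2 R)ᴴ = EMat a (b + Matrix.vecMul a R) :=
  stmt4_general R hR a b ha

end

end CliffordHierarchy
end
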